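/- arXiv:2403.17315 — 5 statements merged into one kernel-verified Lean document; each statement's English description precedes it below -/
import Mathlib

section
/- Let d ≥ 1 be an integer and f_c(z) = z^{d+2} + c z^2 over ℤ[c], so that f_c'(z) = (d+2)z^{d+1} + 2cz. Then the following identity holds in ℤ[c, x]: Res_z(f_c(z) − z, x − f_c'(z)) = x · ((x − (d+2))^{d+1} + c·(−cd)^d·(x − 2)). (This is the explicit formula for the first multiplier polynomial δ_1(x) of f_c.) -/
open Polynomial

/-- The resultant of two polynomials `f` and `g`, defined as the determinant of their
Sylvester matrix (rows of coefficients of `f` repeated `g.natDegree` times, followed by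
rows of coefficients of `g` repeated `f.natDegree` times). -/
noncomputable def resultant {R : Type*} [CommRing R] (f g : Polynomial R) : R :=
  Matrix.det (Matrix.of fun i j : Fin (g.natDegree + f.natDegree) =>
    if (i : ℕ) < g.natDegree then
      (if (i : ℕ) ≤ (j : ℕ) ∧ (j : ℕ) ≤ (i : ℕ) + f.natDegree then
        f.coeff (f.natDegree + (i : ℕ) - (j : ℕ)) else 0)
    else
      (if (i : ℕ) - g.natDegree ≤ (j : ℕ) ∧ (j : ℕ) ≤ ((i : ℕ) - g.natDegree) + g.natDegree then
        g.coeff (g.natDegree + ((i : ℕ) - g.natDegree) - (j : ℕ)) else 0))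

/-- The `n`-fold compositional iterate of a polynomial: `polyIter f 0 = X`,
`polyIter f (n+1) = (polyIter f n).comp f`. -/
noncomputable def polyIter {R : Type*} [CommSemiring R] (f : Polynomial R) : ℕ → Polynomial R
  | 0 => X
  | n + 1 => (polyIter f n).comp f

/-- `f_c(z) = z^{d+2} + c z²` as a polynomial in `z` over `ℤ[c][x]`
(innermost variable `c`, middle variable `x`, outer variable `z`). -/
noncomputable def fFam (d : ℕ) : Polynomial (Polynomial (Polynomial ℤ)) :=
  X ^ (d + 2) + C (C X) * X ^ 2

/-! The fixed-point polynomial factors as `f_c(z) - z = z · h(z)` with monic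
`h = z^{d+1} + cz - 1`, so the resultant is `Res(z, x - f_c') · Res(h, x - f_c')`, i.e.
`x · Res(h, x - f_c')`. Modulo `h` we have `z^{d+1} ≡ 1 - cz`, hence
`x - f_c'(z) ≡ (x - (d+2)) + dcz`, and the resultant of a polynomial with a linear one is its
homogenised evaluation, `Res(h, az + b) = Σ hᵢ bⁱ (-a)^{m-i}`. -/

-- Reversing rows and columns of Mathlib's Sylvester matrix gives the transpose of ours.
theorem resultant_eq_polynomial_resultant {R : Type*} [CommRing R] (f g : R[X]) :
    _root_.resultant f g = f.resultant g := by
  set e : Fin (g.natDegree + f.natDegree) ≃ Fin (f.natDegree + g.natDegree) :=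
    (finCongr (add_comm _ _)).trans Fin.revPerm
  rw [Polynomial.resultant, ← Matrix.det_submatrix_equiv_self e, ← Matrix.det_transpose]
  unfold _root_.resultant
  congr 1
  ext i j
  have hi := i.isLt
  have hj := j.isLt
  simp only [Matrix.of_apply, Matrix.transpose_apply, Matrix.submatrix_apply, e, sylvester,
    Fin.addCases, Equiv.trans_apply, finCongr_apply, Fin.revPerm_apply, Fin.val_rev, Fin.val_cast,
    Set.mem_Icc, Fin.val_castLT, Fin.val_subNat, eq_rec_constant]
  split_ifs <;> first | rfl | (exfalso; omega) | (congr 1; omega)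

namespace Polynomial

theorem resultant_C_mul_X_add_C_right {R : Type*} [CommRing R] (f : R[X]) (a b : R) {m : ℕ}
    (hf : f.natDegree ≤ m) :
    f.resultant (C a * X + C b) m 1 =
      ∑ i ∈ Finset.range (m + 1), f.coeff i * b ^ i * (-a) ^ (m - i) := by
  induction f using induction_of_Splits_of_injective_of_surjective with
  | Splits K f _ =>
    obtain rfl | ha := eq_or_ne a 0
    · rw [Finset.sum_eq_single_of_mem m (Finset.self_mem_range_succ m)]
      · rw [C_0, zero_mul, zero_add, resultant_C_right, pow_one, tsub_self, pow_zero, mul_one]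
      · intro i hi him
        have : m - i ≠ 0 := by grind
        simp [zero_pow this]
    · have hlin : C a * X + C b = C a * (X - C (-b / a)) := by
        rw [mul_sub, ← C_mul, mul_div_cancel₀ _ ha]; simp
      rw [hlin, resultant_C_mul_right, resultant_X_sub_C_right _ _ _ hf,
        eval_eq_sum_range' (Nat.lt_succ_of_le hf), Finset.mul_sum, Finset.mul_sum]
      refine Finset.sum_congr rfl fun i hi => ?_
      have hsplit : a ^ m * (-1) ^ m = (-a) ^ (m - i) * (-a) ^ i := by
        rw [pow_sub_mul_pow _ (Nat.le_of_lt_succ (Finset.mem_range.mp hi))]; ring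
      have hcancel : -a * (-b / a) = b := by field_simp
      calc a ^ m * ((-1) ^ m * (f.coeff i * (-b / a) ^ i))
          = (-a) ^ (m - i) * (-a * (-b / a)) ^ i * f.coeff i := by
            rw [← mul_assoc, hsplit, mul_pow]; generalize -b / a = r; ring
        _ = f.coeff i * b ^ i * (-a) ^ (m - i) := by rw [hcancel]; ring
  | injective R S φ hφ f IH =>
    apply hφ
    have := IH (φ a) (φ b) (natDegree_map_le.trans hf)
    rw [show C (φ a) * X + C (φ b) = (C a * X + C b).map φ by simp, resultant_map_map] at this
    simpa [map_sum] using this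
  | surjective R S φ hφ f IH =>
    obtain ⟨f', rfl, hdeg⟩ := exists_degree_eq_of_mem_lifts (Polynomial.map_surjective φ hφ f)
    obtain ⟨a', rfl⟩ := hφ a
    obtain ⟨b', rfl⟩ := hφ b
    rw [show C (φ a') * X + C (φ b') = (C a' * X + C b').map φ by simp, resultant_map_map,
      IH f' a' b' (by rwa [natDegree_eq_natDegree hdeg])]
    simp [map_sum]

theorem resultant_X_mul_left {R : Type*} [CommRing R] [Nontrivial R] (f g : R[X]) {n : ℕ}
    (hg : g.natDegree ≤ n) :
    (X * f).resultant g (f.natDegree + 1) n = g.coeff 0 * f.resultant g f.natDegree n := by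
  have hX := resultant_X_sub_C_left g n 0 hg
  rw [C_0, sub_zero, ← coeff_zero_eq_eval_zero] at hX
  rw [add_comm, ← natDegree_X (R := R), resultant_mul_left _ _ _ _ hg, natDegree_X, hX]

end Polynomial

noncomputable def fixedPointCofactor (d : ℕ) : ℤ[X][X][X] := X ^ (d + 1) + C (C X) * X - 1

theorem fFam_sub_X (d : ℕ) : fFam d - X = X * fixedPointCofactor d := by
  rw [fFam, fixedPointCofactor]; ring

theorem natDegree_fixedPointCofactor {d : ℕ} (hd : 1 ≤ d) :
    (fixedPointCofactor d).natDegree = d + 1 := by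
  unfold fixedPointCofactor
  compute_degree!
  rw [if_neg (by omega), add_zero]
  exact one_ne_zero

theorem monic_fixedPointCofactor {d : ℕ} (hd : 1 ≤ d) : (fixedPointCofactor d).Monic := by
  unfold fixedPointCofactor
  monicity!
  omega

theorem coeff_fixedPointCofactor (d i : ℕ) : (fixedPointCofactor d).coeff i =
    (if i = d + 1 then 1 else 0) + (if i = 1 then C X else 0) - (if i = 0 then 1 else 0) := by
  simp [fixedPointCofactor, coeff_X_pow, coeff_X, coeff_one, eq_comm]

theorem derivative_fFam (d : ℕ) :
    derivative (fFam d) = C ((d : ℤ[X][X]) + 2) * X ^ (d + 1) + C (2 * C X) * X := by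
  simp only [fFam, derivative_add, derivative_X_pow, derivative_C_mul, C_mul]
  push_cast
  ring

theorem natDegree_C_X_sub_derivative_fFam {d : ℕ} (hd : 1 ≤ d) :
    (C X - derivative (fFam d)).natDegree = d + 1 := by
  rw [derivative_fFam]
  compute_degree!
  rw [if_neg (by omega), neg_zero, zero_add, ← Int.cast_natCast, ← Int.cast_neg,
    ← Int.cast_add, ← ne_eq, Int.cast_ne_zero]
  omega

theorem coeff_zero_C_X_sub_derivative_fFam (d : ℕ) :
    (C X - derivative (fFam d)).coeff 0 = X := by
  simp [derivative_fFam]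

theorem C_X_sub_derivative_fFam_add_fixedPointCofactor_mul (d : ℕ) :
    C X - derivative (fFam d) + fixedPointCofactor d * C ((d : ℤ[X][X]) + 2) =
      C (C X * (d : ℤ[X][X])) * X + C (X - ((d : ℤ[X][X]) + 2)) := by
  rw [derivative_fFam, fixedPointCofactor]
  simp only [C_mul, C_add, C_sub, map_natCast, C_ofNat]
  ring

theorem sum_coeff_fixedPointCofactor_mul_pow (d : ℕ) (a b : ℤ[X][X]) :
    ∑ i ∈ Finset.range (d + 1 + 1),
        (fixedPointCofactor d).coeff i * b ^ i * (-a) ^ (d + 1 - i) =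
      b ^ (d + 1) + C X * b * (-a) ^ d - (-a) ^ (d + 1) := by
  simp [coeff_fixedPointCofactor, add_mul, sub_mul, ite_mul, Finset.sum_add_distrib,
    Finset.sum_sub_distrib, Finset.sum_ite_eq']

theorem resultant_fixedPointCofactor_C_X_sub_derivative_fFam {d : ℕ} (hd : 1 ≤ d) :
    (fixedPointCofactor d).resultant (C X - derivative (fFam d)) =
      (X - ((d : ℤ[X][X]) + 2)) ^ (d + 1)
        + C X * (X - ((d : ℤ[X][X]) + 2)) * (-(C X * (d : ℤ[X][X]))) ^ d
        - (-(C X * (d : ℤ[X][X]))) ^ (d + 1) := by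
  have hh := natDegree_fixedPointCofactor hd
  have hlead : (fixedPointCofactor d).coeff (d + 1) = 1 :=
    hh ▸ (monic_fixedPointCofactor hd).coeff_natDegree
  have hlin : (C (C X * (d : ℤ[X][X])) * X + C (X - ((d : ℤ[X][X]) + 2))).natDegree ≤ 1 := by
    compute_degree
  have hdeg := resultant_add_right_deg (fixedPointCofactor d) _ (d + 1) 1 d hlin
  rw [add_comm 1 d, hlead, one_pow, one_mul] at hdeg
  rw [natDegree_C_X_sub_derivative_fFam hd, hh,
    ← resultant_add_mul_right _ _ (C ((d : ℤ[X][X]) + 2)) _ _ (by simp) hh.le,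
    C_X_sub_derivative_fFam_add_fixedPointCofactor_mul, hdeg,
    resultant_C_mul_X_add_C_right _ _ _ hh.le, sum_coeff_fixedPointCofactor_mul_pow]

/-- Explicit formula for the first multiplier polynomial of `f_c(z) = z^{d+2} + cz²`:
`Res_z(f_c(z) − z, x − f_c'(z)) = x·((x − (d+2))^{d+1} + c(−cd)^d (x − 2))` in `ℤ[c][x]`,
where `x = X` and `c = C X` in `ℤ[c][x]`. -/
theorem first_multiplier_polynomial_formula (d : ℕ) (hd : 1 ≤ d) :
    _root_.resultant (fFam d - X) (C X - derivative (fFam d))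
      = (X : Polynomial (Polynomial ℤ)) *
          ((X - ((d : Polynomial (Polynomial ℤ)) + 2)) ^ (d + 1) +
            C X * (-(C X * (d : Polynomial (Polynomial ℤ)))) ^ d *
              (X - 2)) := by
  rw [resultant_eq_polynomial_resultant, fFam_sub_X,
    natDegree_X_mul (monic_fixedPointCofactor hd).ne_zero, resultant_X_mul_left _ _ le_rfl,
    coeff_zero_C_X_sub_derivative_fFam, resultant_fixedPointCofactor_C_X_sub_derivative_fFam hd,
    pow_succ (-(C X * (d : ℤ[X][X])))]
  ring
end

section
/- Let O be an integral domain, f a monic polynomial over O, and k, m positive integers with k | m. Let z₀ be an element of an algebraic closure Ω of Frac(O) with f^{∘k}(z₀) = z₀, and set λ := (f^{∘k})'(z₀). Write m̃ := Π_{p prime, p | k} p^{v_p(m)} (the k-part of m) and m' := m / m̃ (the prime-to-k part of m), where v_p denotes the p-adic valuation. Then k divides m̃, and in Ω the following identity holds: Π_{e | m', μ(m'/e) = 1} ((f^{∘ m̃ e})'(z₀) − 1) = Φ_{m'}(λ^{m̃/k}) · Π_{e | m', μ(m'/e) = −1} ((f^{∘ m̃ e})'(z₀) − 1), where (f^{∘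 m̃ e})'(z₀) = λ^{m̃ e / k} and Φ_{m'} is the m'-th cyclotomic polynomial. -/
open Polynomial

/-- The `k`-part of `m`: `m̃ = ∏_{p prime, p ∣ k} p^{v_p(m)}`. -/
def kPart (k m : ℕ) : ℕ := ∏ p ∈ k.primeFactors, p ^ (m.factorization p)

/-!
Along the orbit of a point `z₀` of period `k`, the chain rule gives `(f^{∘kt})'(z₀) = λ^t`, so
every factor of the identity is `(λ^{m̃/k})^e - 1`. The identity is therefore the Möbius
inversion formula `Φ_n = ∏_{e ∣ n} (X^e - 1)^{μ(n/e)}`, cleared of denominators: proved in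
`ℤ[X]` inside the field of rational functions, it then holds over every commutative ring.
-/

open ArithmeticFunction
open scoped ArithmeticFunction.Moebius

theorem Finset.prod_zpow_moebius_eq_div {ι G : Type*} [DivisionCommMonoid G] (s : Finset ι)
    (a : ι → ℕ) (g : ι → G) :
    ∏ i ∈ s, g i ^ μ (a i) =
      (∏ i ∈ s with μ (a i) = 1, g i) / ∏ i ∈ s with μ (a i) = -1, g i := by
  have h : ∀ i ∈ s, g i ^ μ (a i) =
      (if μ (a i) = 1 then g i else 1) * (if μ (a i) = -1 then g i else 1)⁻¹ := by
    intro i _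
    rcases moebius_eq_or (a i) with h | h | h <;> simp [h]
  rw [prod_congr rfl h, prod_mul_distrib, prod_inv_distrib, prod_ite, prod_ite, prod_const_one,
    prod_const_one, mul_one, mul_one, div_eq_mul_inv]

namespace Polynomial

theorem cyclotomic_mul_prod_X_pow_sub_one_of_moebius_eq_neg_one (R : Type*) [CommRing R] (n : ℕ) :
    cyclotomic n R * ∏ e ∈ n.divisors with μ (n / e) = -1, (X ^ e - 1) =
      ∏ e ∈ n.divisors with μ (n / e) = 1, (X ^ e - 1) := by
  suffices hℤ : cyclotomic n ℤ * ∏ e ∈ n.divisors with μ (n / e) = -1, (X ^ e - 1) =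
      ∏ e ∈ n.divisors with μ (n / e) = 1, (X ^ e - 1 : ℤ[X]) by
    simpa [Polynomial.map_prod] using congrArg (map (Int.castRingHom R)) hℤ
  apply IsFractionRing.injective ℤ[X] (RatFunc ℤ)
  set φ := algebraMap ℤ[X] (RatFunc ℤ)
  have hne : ∀ e ∈ n.divisors, φ (X ^ e - 1) ≠ 0 := fun e he =>
    (map_ne_zero_iff φ (IsFractionRing.injective _ _)).2
      (monic_X_pow_sub_C 1 (Nat.pos_of_mem_divisors he).ne').ne_zero
  have hinv : φ (cyclotomic n ℤ) = ∏ e ∈ n.divisors, φ (X ^ e - 1) ^ μ (n / e) :=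
    (cyclotomic_eq_prod_X_pow_sub_one_pow_moebius ℤ).trans
      (Nat.prod_divisorsAntidiagonal' fun a b => φ (X ^ b - 1) ^ μ a)
  rw [map_mul, map_prod, map_prod, hinv, Finset.prod_zpow_moebius_eq_div, div_mul_cancel₀]
  exact Finset.prod_ne_zero_iff.2 fun e he => hne e (Finset.mem_filter.1 he).1

theorem prod_pow_sub_one_of_moebius_eq_one {R : Type*} [CommRing R] (n : ℕ) (x : R) :
    ∏ e ∈ n.divisors with μ (n / e) = 1, (x ^ e - 1) =
      (cyclotomic n R).eval x * ∏ e ∈ n.divisors with μ (n / e) = -1, (x ^ e - 1) := by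
  simpa [eval_prod] using (congrArg (eval x) (cyclotomic_mul_prod_X_pow_sub_one_of_moebius_eq_neg_one R n)).symm

end Polynomial

section polyIter

variable {R : Type*} [CommSemiring R] (g : R[X])

theorem polyIter_add (a b : ℕ) : polyIter g (a + b) = (polyIter g a).comp (polyIter g b) := by
  induction b with
  | zero => simp [polyIter]
  | succ b ih => rw [← Nat.add_assoc]; simp [polyIter, ih, comp_assoc]

variable {g} {k : ℕ} {z : R}

theorem eval_derivative_polyIter_mul_of_eval_eq (hz : (polyIter g k).eval z = z) (t : ℕ) :
    (derivative (polyIter g (k * t))).eval z = (derivative (polyIter g k)).eval z ^ t := by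
  induction t with
  | zero => simp [polyIter]
  | succ t ih =>
    rw [Nat.mul_succ, polyIter_add, derivative_comp, eval_mul, eval_comp, hz, ih, pow_succ,
      mul_comm]

end polyIter

theorem dvd_kPart {k m : ℕ} (hm : m ≠ 0) (hkm : k ∣ m) : k ∣ kPart k m := by
  have hk : k ≠ 0 := ne_zero_of_dvd_ne_zero hm hkm
  conv_lhs => rw [Nat.prod_primeFactors_pow_factorization hk]
  exact Finset.prod_dvd_prod_of_dvd _ _ fun p _ =>
    pow_dvd_pow p ((Nat.factorization_le_iff_dvd hk hm).2 hkm p)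

theorem dynatomic_modular_curve_equality_general
    (O : Type*) [CommRing O] [IsDomain O] (f : Polynomial O)
    (k m : ℕ) (hm : 0 < m) (hkm : k ∣ m)
    (z₀ : AlgebraicClosure (FractionRing O))
    -- z₀ is a periodic point of f of period k:
    (hz : (polyIter (f.map (algebraMap O (AlgebraicClosure (FractionRing O)))) k).eval z₀
      = z₀) :
    -- k divides the k-part m̃ of m:
    k ∣ kPart k m ∧
    -- (f^{∘ m̃ e})'(z₀) = λ^{m̃ e / k}, where λ = (f^{∘k})'(z₀):
    (∀ e : ℕ, e ∣ m / kPart k m →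
      (derivative (polyIter (f.map (algebraMap O (AlgebraicClosure (FractionRing O))))
          (kPart k m * e))).eval z₀
        = ((derivative (polyIter (f.map (algebraMap O (AlgebraicClosure (FractionRing O))))
            k)).eval z₀) ^ (kPart k m * e / k)) ∧
    -- ∏_{e ∣ m', μ(m'/e)=1} ((f^{∘ m̃ e})'(z₀) − 1)
    --   = Φ_{m'}(λ^{m̃/k}) · ∏_{e ∣ m', μ(m'/e)=−1} ((f^{∘ m̃ e})'(z₀) − 1),
    -- where m' = m/m̃ is the prime-to-k part of m:
    ∏ e ∈ (m / kPart k m).divisors.filter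
        (fun e => ArithmeticFunction.moebius ((m / kPart k m) / e) = 1),
        ((derivative (polyIter (f.map (algebraMap O (AlgebraicClosure (FractionRing O))))
            (kPart k m * e))).eval z₀ - 1)
      = (cyclotomic (m / kPart k m) (AlgebraicClosure (FractionRing O))).eval
          ((((derivative (polyIter (f.map (algebraMap O (AlgebraicClosure (FractionRing O))))
              k)).eval z₀)) ^ (kPart k m / k)) *
        ∏ e ∈ (m / kPart k m).divisors.filter
            (fun e => ArithmeticFunction.moebius ((m / kPart k m) / e) = -1),
          ((derivative (polyIter (f.map (algebraMap O (AlgebraicClosure (FractionRing O))))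
              (kPart k m * e))).eval z₀ - 1) := by
  set g := f.map (algebraMap O (AlgebraicClosure (FractionRing O)))
  set lam := (derivative (polyIter g k)).eval z₀
  have hk : 0 < k := Nat.pos_of_dvd_of_pos hkm hm
  obtain ⟨c, hc⟩ := dvd_kPart hm.ne' hkm
  have hck : kPart k m / k = c := by rw [hc, Nat.mul_div_cancel_left _ hk]
  have hderiv : ∀ e, (derivative (polyIter g (kPart k m * e))).eval z₀ = (lam ^ c) ^ e := by
    intro e
    rw [hc, mul_assoc, eval_derivative_polyIter_mul_of_eval_eq hz, pow_mul]
  refine ⟨⟨c, hc⟩, fun e _ => ?_, ?_⟩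
  · rw [hderiv, hc, mul_assoc, Nat.mul_div_cancel_left _ hk, pow_mul]
  · simp_rw [hderiv, hck]
    exact prod_pow_sub_one_of_moebius_eq_one _ _

theorem dynatomic_modular_curve_equality
    (O : Type*) [CommRing O] [IsDomain O] (f : Polynomial O) (hf : f.Monic)
    (k m : ℕ) (hk : 0 < k) (hm : 0 < m) (hkm : k ∣ m)
    (z₀ : AlgebraicClosure (FractionRing O))
    -- z₀ is a periodic point of f of period k:
    (hz : (polyIter (f.map (algebraMap O (AlgebraicClosure (FractionRing O)))) k).eval z₀
      = z₀) :
    -- k divides the k-part m̃ of m: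
    k ∣ kPart k m ∧
    -- (f^{∘ m̃ e})'(z₀) = λ^{m̃ e / k}, where λ = (f^{∘k})'(z₀):
    (∀ e : ℕ, e ∣ m / kPart k m →
      (derivative (polyIter (f.map (algebraMap O (AlgebraicClosure (FractionRing O))))
          (kPart k m * e))).eval z₀
        = ((derivative (polyIter (f.map (algebraMap O (AlgebraicClosure (FractionRing O))))
            k)).eval z₀) ^ (kPart k m * e / k)) ∧
    -- ∏_{e ∣ m', μ(m'/e)=1} ((f^{∘ m̃ e})'(z₀) − 1)
    --   = Φ_{m'}(λ^{m̃/k}) · ∏_{e ∣ m', μ(m'/e)=−1} ((f^{∘ m̃ e})'(z₀) − 1),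
    -- where m' = m/m̃ is the prime-to-k part of m:
    ∏ e ∈ (m / kPart k m).divisors.filter
        (fun e => ArithmeticFunction.moebius ((m / kPart k m) / e) = 1),
        ((derivative (polyIter (f.map (algebraMap O (AlgebraicClosure (FractionRing O))))
            (kPart k m * e))).eval z₀ - 1)
      = (cyclotomic (m / kPart k m) (AlgebraicClosure (FractionRing O))).eval
          ((((derivative (polyIter (f.map (algebraMap O (AlgebraicClosure (FractionRing O))))
              k)).eval z₀)) ^ (kPart k m / k)) *
        ∏ e ∈ (m / kPart k m).divisors.filter
            (fun e => ArithmeticFunction.moebius ((m / kPart k m) / e) = -1),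
          ((derivative (polyIter (f.map (algebraMap O (AlgebraicClosure (FractionRing O))))
              (kPart k m * e))).eval z₀ - 1) :=
  dynatomic_modular_curve_equality_general O f k m hm hkm z₀ hz
end

section
/- Let d ≥ 2 be an integer and γ ∈ ℂ, and suppose that f_γ(z) = z^d + γ has a parabolic periodic point in ℂ, i.e., there exist z₀ ∈ ℂ and m ≥ 1 with f_γ^{∘m}(z₀) = z₀ such that (f_γ^{∘m})'(z₀) is a root of unity. Then d^d γ^{d−1} is an algebraic integer. In particular, if in addition γ ∈ ℚ, then d^d γ^{d−1} ∈ ℤ. -/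
/-!
Let v be a valuation on ℂ with v(d^d γ^(d-1)) > 1. Since v(d) ≤ 1, also v(γ) > 1. A point z with
v(z)^d > v(γ) escapes: the valuations along its orbit increase strictly, so it is not periodic;
a point with v(z)^d < v(γ) is mapped to one of valuation v(γ), which escapes. Hence
v(z_i)^d = v(γ) along a cycle z_0, …, z_(m-1), and the multiplier λ = ∏ d z_i^(d-1) satisfies
v(λ)^d = v(d^d γ^(d-1))^m > 1, which is impossible for a root of unity. So d^d γ^(d-1) lies in
every valuation subring of ℂ, i.e. it is integral over ℤ; as ℤ is integrally closed, it is an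
integer when γ is rational.
-/

open Function Finset

theorem isIntegral_of_forall_mem_valuationSubring {R K : Type*} [CommRing R] [Field K]
    [Algebra R K] {x : K}
    (h : ∀ V : ValuationSubring K, (algebraMap R K).range ≤ V.toSubring → x ∈ V) :
    IsIntegral R x := by
  by_contra hx
  obtain ⟨V, hRV, hxV⟩ := Subring.exists_le_valuationSubring_of_isIntegrallyClosedIn
    (R := (integralClosure R K).toSubring) hx
  exact hxV (h V fun _ ⟨r, hr⟩ => hRV (hr ▸ isIntegral_algebraMap))

theorem deriv_iterate_eq_prod {𝕜 : Type*} [NontriviallyNormedField 𝕜] {f : 𝕜 → 𝕜}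
    (hf : Differentiable 𝕜 f) (x : 𝕜) (n : ℕ) :
    deriv f^[n] x = ∏ i ∈ range n, deriv f (f^[i] x) := by
  induction n with
  | zero => simp
  | succ n ih =>
    rw [iterate_succ', deriv_comp x (hf _) (hf.iterate n x), prod_range_succ, ih, mul_comm]

theorem Function.not_isPeriodicPt_of_lt_map {α β : Type*} [Preorder β] {f : α → α} {s : Set α}
    {g : α → β} (hs : Set.MapsTo f s s) (hg : ∀ x ∈ s, g x < g (f x)) {x : α} (hx : x ∈ s)
    {n : ℕ} (hn : 0 < n) : ¬IsPeriodicPt f n x := fun hper => by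
  have : StrictMono fun k => g (f^[k] x) := strictMono_nat_of_lt_succ fun k => by
    rw [iterate_succ_apply']
    exact hg _ (hs.iterate k hx)
  simpa [hper.eq] using this hn

namespace Valuation

variable {R Γ₀ : Type*} [CommRing R] [LinearOrderedCommGroupWithZero Γ₀] (v : Valuation R Γ₀)

theorem map_natCast_le_one (n : ℕ) : v n ≤ 1 := by
  induction n with
  | zero => simp
  | succ n ih =>
    push_cast
    exact (v.map_add _ _).trans (max_le ih v.map_one.le)

theorem map_eq_one_of_pow_eq_one {x : R} {n : ℕ} (hn : n ≠ 0) (hx : x ^ n = 1) : v x = 1 :=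
  (pow_eq_one_iff_of_nonneg zero_le hn).1 (by rw [← map_pow, hx, map_one])

variable {d : ℕ} {c : R}

theorem map_pow_add_of_lt_pow {z : R} (h : v c < v z ^ d) : v (z ^ d + c) = v z ^ d := by
  rw [map_add_eq_of_lt_left _ (by rwa [map_pow]), map_pow]

theorem map_pow_add_of_pow_lt {z : R} (h : v z ^ d < v c) : v (z ^ d + c) = v c := by
  rw [map_add_eq_of_lt_right _ (by rwa [map_pow])]

theorem map_pow_eq_of_isPeriodicPt (hd : 2 ≤ d) (hc : 1 < v c) {m : ℕ} (hm : 0 < m) {z : R}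
    (hz : IsPeriodicPt (fun z => z ^ d + c) m z) : v z ^ d = v c := by
  have one_lt : ∀ w, v c < v w ^ d → 1 < v w := fun w hw =>
    (one_lt_pow_iff_of_nonneg zero_le (by omega)).1 (hc.trans hw)
  have escape : ∀ w, v c < v w ^ d → v w < v (w ^ d + c) ∧ v c < v (w ^ d + c) ^ d := by
    intro w hw
    rw [map_pow_add_of_lt_pow v hw]
    exact ⟨lt_self_pow₀ (one_lt w hw) (by omega),
      hw.trans_le (le_self_pow₀ (one_le_pow₀ (one_lt w hw).le) (by omega))⟩
  have hle : ∀ w, IsPeriodicPt (fun z => z ^ d + c) m w → v w ^ d ≤ v c := fun w hw =>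
    not_lt.1 fun hlt => not_isPeriodicPt_of_lt_map (s := {w | v c < v w ^ d}) (g := v)
      (fun w hw => (escape w hw).2) (fun w hw => (escape w hw).1) hlt hm hw
  refine (hle z hz).antisymm (not_lt.1 fun hlt => ?_)
  have hnext := hle _ hz.apply
  rw [map_pow_add_of_pow_lt v hlt] at hnext
  exact hnext.not_gt (lt_self_pow₀ hc (by omega))

theorem map_multiplier_pow_eq (hd : 2 ≤ d) (hc : 1 < v c) {m : ℕ} (hm : 0 < m) {z : R}
    (hz : IsPeriodicPt (fun z => z ^ d + c) m z) :
    v (∏ i ∈ range m, (d : R) * ((fun z => z ^ d + c)^[i] z) ^ (d - 1)) ^ d =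
      v ((d : R) ^ d * c ^ (d - 1)) ^ m := by
  rw [map_prod, ← prod_pow, pow_eq_prod_const]
  refine prod_congr rfl fun i _ => ?_
  rw [map_mul, map_mul, map_pow, map_pow, map_pow, mul_pow, ← pow_mul, mul_comm (d - 1),
    pow_mul, map_pow_eq_of_isPeriodicPt v hd hc hm (hz.apply_iterate i)]

theorem map_le_one_of_isPeriodicPt (hd : 2 ≤ d) {m : ℕ} (hm : 0 < m) {z : R}
    (hz : IsPeriodicPt (fun z => z ^ d + c) m z)
    (hmult : v (∏ i ∈ range m, (d : R) * ((fun z => z ^ d + c)^[i] z) ^ (d - 1)) ≤ 1) :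
    v ((d : R) ^ d * c ^ (d - 1)) ≤ 1 := by
  by_contra! h
  have hc : 1 < v c := by
    by_contra! hc
    refine h.not_ge ?_
    rw [map_mul, map_pow, map_pow]
    exact mul_le_one' (pow_le_one' (v.map_natCast_le_one d) d) (pow_le_one' hc _)
  exact (pow_le_one' hmult d).not_gt
    (map_multiplier_pow_eq v hd hc hm hz ▸ one_lt_pow₀ h hm.ne')

end Valuation

theorem Rat.exists_int_eq_of_isIntegral_cast {K : Type*} [Field K] [CharZero K] {q : ℚ}
    (h : IsIntegral ℤ (q : K)) : ∃ a : ℤ, q = a := by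
  obtain ⟨a, ha⟩ := IsIntegrallyClosed.isIntegral_iff.mp
    ((isIntegral_algebraMap_iff (algebraMap ℚ K).injective).mp h)
  exact ⟨a, by simpa using ha.symm⟩

theorem integrality_of_parabolic_parameters (d : ℕ) (hd : 2 ≤ d) (γ : ℂ)
    -- f_γ(z) = z^d + γ has a parabolic m-periodic point:
    (h : ∃ z₀ : ℂ, ∃ m : ℕ, 1 ≤ m ∧ (fun z : ℂ => z ^ d + γ)^[m] z₀ = z₀ ∧
      ∃ j : ℕ, 0 < j ∧ (deriv ((fun z : ℂ => z ^ d + γ)^[m]) z₀) ^ j = 1) :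
    -- then d^d γ^{d−1} is an algebraic integer …
    IsIntegral ℤ ((d : ℂ) ^ d * γ ^ (d - 1)) ∧
    -- … and if moreover γ is rational, then d^d γ^{d−1} is an integer:
    (∀ q : ℚ, γ = (q : ℂ) → ∃ a : ℤ, (d : ℚ) ^ d * q ^ (d - 1) = (a : ℚ)) := by
  obtain ⟨z₀, m, hm, hper, j, hj, hroot⟩ := h
  have hmult : deriv (fun z : ℂ => z ^ d + γ)^[m] z₀ =
      ∏ i ∈ range m, (d : ℂ) * ((fun z : ℂ => z ^ d + γ)^[i] z₀) ^ (d - 1) := by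
    rw [deriv_iterate_eq_prod ((differentiable_pow d).add_const γ)]
    simp
  have hint : IsIntegral ℤ ((d : ℂ) ^ d * γ ^ (d - 1)) :=
    isIntegral_of_forall_mem_valuationSubring fun V _ => V.mem_of_valuation_le_one _ <|
      V.valuation.map_le_one_of_isPeriodicPt hd hm hper <| by
        rw [← hmult, V.valuation.map_eq_one_of_pow_eq_one hj.ne' hroot]
  refine ⟨hint, ?_⟩
  rintro q rfl
  exact Rat.exists_int_eq_of_isIntegral_cast (K := ℂ) (by push_cast; exact hint)
end

section
/- Let d ≥ 1 be an integer and work in ℤ[c][z] with f(z) = z^{d+1} + cz, f̃(z) = z^{d+1} − c z^d + c, and τ(z) = z^d + c. Then: (a) τ(f(z)) = f̃(τ(z)); and for every positive integer m: (b) f̃^{∘m}(z) = (z − c)·(Π_{i=0}^{m−1} f̃^{∘i}(z))^d + c; (c) f^{∘m}(z) = z · Π_{i=0}^{m−1} f̃^{∘i}(τ(z)); (d) the derivative of the m-th iterate satisfies (f^{∘m})'(z) = Π_{i=0}^{m−1} ((d+1)·f̃^{∘i}(τ(z)) − dc). -/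
open Polynomial

/-- `c` as a constant polynomial in `ℤ[c][z]` (inner variable `c`, outer variable `z`). -/
noncomputable def cConst : Polynomial (Polynomial ℤ) := C X

/-- `f(z) = z^{d+1} + cz` over `ℤ[c]`. -/
noncomputable def fLin (d : ℕ) : Polynomial (Polynomial ℤ) := X ^ (d + 1) + cConst * X

/-- `f̃(z) = z^{d+1} − cz^d + c` over `ℤ[c]`. -/
noncomputable def fTil (d : ℕ) : Polynomial (Polynomial ℤ) :=
  X ^ (d + 1) - cConst * X ^ d + cConst

/-- `τ(z) = z^d + c` over `ℤ[c]`. -/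
noncomputable def tau (d : ℕ) : Polynomial (Polynomial ℤ) := X ^ d + cConst

lemma polyIter_succ' {R : Type*} [CommSemiring R] (f : Polynomial R) (n : ℕ) :
    polyIter f (n + 1) = (polyIter f n).comp f := rfl

lemma polyIter_zero' {R : Type*} [CommSemiring R] (f : Polynomial R) :
    polyIter f 0 = X := rfl

lemma polyIter_one' {R : Type*} [CommSemiring R] (f : Polynomial R) :
    polyIter f 1 = f := by
  rw [polyIter_succ', polyIter_zero', X_comp]

lemma fLin_eq (d : ℕ) : fLin d = X * tau d := by
  simp only [fLin, tau, cConst]; ring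

lemma partA (d : ℕ) : (tau d).comp (fLin d) = (fTil d).comp (tau d) := by
  have ht : tau d - cConst = X ^ d := by simp only [tau]; ring
  calc (tau d).comp (fLin d) = (fLin d) ^ d + cConst := by
        simp only [tau, cConst, add_comp, pow_comp, X_comp, C_comp]
    _ = X ^ d * (tau d) ^ d + cConst := by rw [fLin_eq, mul_pow]
    _ = (fTil d).comp (tau d) := by
        simp only [fTil, cConst, add_comp, sub_comp, mul_comp, pow_comp, X_comp, C_comp]
        rw [← ht]
        simp only [cConst]
        ring

lemma partB (d : ℕ) : ∀ m : ℕ, 1 ≤ m →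
    polyIter (fTil d) m
      = (X - cConst) * (∏ i ∈ Finset.range m, polyIter (fTil d) i) ^ d + cConst := by
  intro m hm
  induction m with
  | zero => omega
  | succ n ih =>
    rcases Nat.eq_or_lt_of_le hm with h | h
    · have : n = 0 := by omega
      subst this
      rw [polyIter_one', Finset.prod_range_one, polyIter_zero']
      simp only [fTil]
      ring
    · have hn : 1 ≤ n := by omega
      rw [polyIter_succ', ih hn, add_comp, mul_comp, sub_comp, X_comp, pow_comp,
        Polynomial.prod_comp]
      have hcomp : ∀ i, (polyIter (fTil d) i).comp (fTil d) = polyIter (fTil d) (i + 1) :=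
        fun i => rfl
      simp only [hcomp]
      have hC : (cConst : Polynomial (Polynomial ℤ)).comp (fTil d) = cConst := by
        simp [cConst]
      rw [hC]
      have h2 : ∏ i ∈ Finset.range (n + 1), polyIter (fTil d) i
          = X * ∏ i ∈ Finset.range n, polyIter (fTil d) (i + 1) := by
        rw [Finset.prod_range_succ', polyIter_zero']; ring
      rw [h2, show (fTil d : Polynomial (Polynomial ℤ)) = (X - cConst) * X ^ d + cConst by
        simp only [fTil]; ring]
      ring

lemma partC (d : ℕ) : ∀ m : ℕ, 1 ≤ m →
    polyIter (fLin d) m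
      = X * ∏ i ∈ Finset.range m, (polyIter (fTil d) i).comp (tau d) := by
  intro m hm
  induction m with
  | zero => omega
  | succ n ih =>
    rcases Nat.eq_or_lt_of_le hm with h | h
    · have : n = 0 := by omega
      subst this
      rw [polyIter_one', Finset.prod_range_one, polyIter_zero', X_comp, fLin_eq]
    · have hn : 1 ≤ n := by omega
      rw [polyIter_succ', ih hn, mul_comp, X_comp, Polynomial.prod_comp]
      have key : ∀ i, ((polyIter (fTil d) i).comp (tau d)).comp (fLin d)
          = (polyIter (fTil d) (i + 1)).comp (tau d) := by
        intro i
        rw [comp_assoc, partA d, ← comp_assoc]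
        rfl
      simp only [key]
      rw [Finset.prod_range_succ', polyIter_zero', X_comp, fLin_eq]
      ring

lemma partD (d : ℕ) : ∀ m : ℕ, 1 ≤ m →
    derivative (polyIter (fLin d) m)
      = ∏ i ∈ Finset.range m,
          ((d + 1 : Polynomial (Polynomial ℤ)) * (polyIter (fTil d) i).comp (tau d) -
            (d : Polynomial (Polynomial ℤ)) * cConst) := by
  intro m hm
  have hder : derivative (fLin d)
      = (d + 1 : Polynomial (Polynomial ℤ)) * (polyIter (fTil d) 0).comp (tau d) -
        (d : Polynomial (Polynomial ℤ)) * cConst := by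
    rw [polyIter_zero', X_comp]
    simp only [fLin, tau, cConst, derivative_add, derivative_mul,
      derivative_X_pow, derivative_X, derivative_C, map_add, map_one, map_natCast,
      Nat.cast_add, Nat.cast_one]
    rw [show d + 1 - 1 = d by omega]
    ring
  induction m with
  | zero => omega
  | succ n ih =>
    rcases Nat.eq_or_lt_of_le hm with h | h
    · have : n = 0 := by omega
      subst this
      rw [Finset.prod_range_one, polyIter_one']
      exact hder
    · have hn : 1 ≤ n := by omega
      rw [polyIter_succ', derivative_comp, ih hn, Polynomial.prod_comp]
      have key : ∀ i, (((d + 1 : Polynomial (Polynomial ℤ)) * (polyIter (fTil d) i).comp (tau d) -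
            (d : Polynomial (Polynomial ℤ)) * cConst)).comp (fLin d)
          = (d + 1 : Polynomial (Polynomial ℤ)) * (polyIter (fTil d) (i + 1)).comp (tau d) -
            (d : Polynomial (Polynomial ℤ)) * cConst := by
        intro i
        rw [sub_comp, mul_comp, mul_comp]
        have h1 : ((polyIter (fTil d) i).comp (tau d)).comp (fLin d)
            = (polyIter (fTil d) (i + 1)).comp (tau d) := by
          rw [comp_assoc, partA d, ← comp_assoc]; rfl
        rw [h1]
        simp [cConst, natCast_comp]
      simp only [key]
      rw [Finset.prod_range_succ', hder]
      ring

theorem tilde_f_identities (d : ℕ) (hd : 1 ≤ d) :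
    -- (a) τ ∘ f = f̃ ∘ τ:
    (tau d).comp (fLin d) = (fTil d).comp (tau d) ∧
    ∀ m : ℕ, 1 ≤ m →
      -- (b) f̃^{∘m}(z) = (z − c)(∏_{i<m} f̃^{∘i}(z))^d + c:
      polyIter (fTil d) m
          = (X - cConst) * (∏ i ∈ Finset.range m, polyIter (fTil d) i) ^ d + cConst ∧
      -- (c) f^{∘m}(z) = z · ∏_{i<m} f̃^{∘i}(τ(z)):
      polyIter (fLin d) m
          = X * ∏ i ∈ Finset.range m, (polyIter (fTil d) i).comp (tau d) ∧
      -- (d) (f^{∘m})'(z) = ∏_{i<m} ((d+1)·f̃^{∘i}(τ(z)) − dc):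
      derivative (polyIter (fLin d) m)
          = ∏ i ∈ Finset.range m,
              ((d + 1 : Polynomial (Polynomial ℤ)) * (polyIter (fTil d) i).comp (tau d) -
                (d : Polynomial (Polynomial ℤ)) * cConst) := by
  exact ⟨partA d, fun m hm => ⟨partB d m hm, partC d m hm, partD d m hm⟩⟩
end

section
/- Let d ≥ 1 be an integer, f̃(z) = z^{d+1} − c z^d + c over ℤ[c], and for a positive integer m let F_m(z) := Π_{i=0}^{m−1} f̃^{∘i}(z) − 1 ∈ ℤ[c][z] (a monic polynomial in z of degree ((d+1)^m − 1)/d). Then: (a) the map α ↦ f̃(α) maps the set of roots of F_m in an algebraic closure of ℚ(c) bijectively onto itself; (b) the degree of F_m with respect to c is ((d+1)^{m−1} − 1)/d; (c) d^{((d+1)^{m−1} − 1)/d} · F_m(z) lies in ℤ[dc, z], i.e., it equals Q(dc, z) for some Q ∈ ℤ[t, z]. -/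
open Polynomial

/-- Exchange the inner and the outer variable of an element of `ℤ[y][t]`. -/
noncomputable def swapPoly (p : Polynomial (Polynomial ℤ)) : Polynomial (Polynomial ℤ) :=
  Polynomial.eval₂
    (Polynomial.eval₂RingHom (Int.castRingHom (Polynomial (Polynomial ℤ))) Polynomial.X)
    (Polynomial.C Polynomial.X) p

/-- `f̃(z) = z^{d+1} − cz^d + c` as a polynomial in `z` over `ℤ[c]`. -/
noncomputable def fTilA (d : ℕ) : Polynomial (Polynomial ℤ) :=
  X ^ (d + 1) - C X * X ^ d + C X

/-- `F_m(z) = ∏_{i<m} f̃^{∘i}(z) − 1 ∈ ℤ[c][z]`. -/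
noncomputable def FmA (d m : ℕ) : Polynomial (Polynomial ℤ) :=
  (∏ i ∈ Finset.range m, polyIter (fTilA d) i) - 1

/-- The ring hom `ℤ[c] → Ω` into an algebraic closure `Ω` of `ℚ(c) = Frac(ℤ[c])`. -/
noncomputable def toClos : Polynomial ℤ →+*
    AlgebraicClosure (FractionRing (Polynomial ℤ)) :=
  (algebraMap (FractionRing (Polynomial ℤ))
      (AlgebraicClosure (FractionRing (Polynomial ℤ)))).comp
    (algebraMap (Polynomial ℤ) (FractionRing (Polynomial ℤ)))

/-! ### Auxiliary definitions and lemmas -/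

noncomputable def PmA (d m : ℕ) : Polynomial (Polynomial ℤ) :=
  ∏ i ∈ Finset.range m, polyIter (fTilA d) i

lemma polyIter_eq (d m : ℕ) :
    polyIter (fTilA d) m = (PmA d m) ^ d * (X - C X) + C X := by
  induction m with
  | zero => simp [polyIter, PmA]
  | succ n ih =>
    have h : (PmA d n).comp (fTilA d) = ∏ i ∈ Finset.range n, polyIter (fTilA d) (i + 1) := by
      rw [PmA, Polynomial.prod_comp]
      rfl
    have hP : PmA d (n + 1) = X * ∏ i ∈ Finset.range n, polyIter (fTilA d) (i + 1) := by
      rw [PmA, Finset.prod_range_succ']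
      simp [polyIter, mul_comm]
    have hf : fTilA d - C X = X ^ d * (X - C X) := by
      rw [fTilA]; ring
    calc polyIter (fTilA d) (n + 1) = (polyIter (fTilA d) n).comp (fTilA d) := rfl
      _ = ((PmA d n) ^ d * (X - C X) + C X).comp (fTilA d) := by rw [ih]
      _ = ((PmA d n).comp (fTilA d)) ^ d * (fTilA d - C X) + C X := by
          simp [add_comp, mul_comp, pow_comp, sub_comp, X_comp, C_comp]
      _ = (X * ∏ i ∈ Finset.range n, polyIter (fTilA d) (i + 1)) ^ d * (X - C X) + C X := by
          rw [h, hf]; ring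
      _ = (PmA d (n + 1)) ^ d * (X - C X) + C X := by rw [hP]

lemma PmA_succ (d m : ℕ) :
    PmA d (m + 1) = (PmA d m) ^ (d + 1) * (X - C X) + C X * PmA d m := by
  have h : PmA d (m + 1) = PmA d m * polyIter (fTilA d) m := by
    rw [PmA, PmA, Finset.prod_range_succ]
  rw [h, polyIter_eq d m]
  ring

lemma PmA_one (d : ℕ) : PmA d 1 = X := by
  simp [PmA, polyIter]

/-! ### Part (a) -/

local notation "Ω" => AlgebraicClosure (FractionRing (Polynomial ℤ))

lemma eval_polyIter (d n : ℕ) (α : Ω) :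
    ((polyIter (fTilA d) n).map toClos).eval α
      = (fun β => ((fTilA d).map toClos).eval β)^[n] α := by
  induction n generalizing α with
  | zero => simp [polyIter]
  | succ n ih =>
    rw [polyIter, Polynomial.map_comp, eval_comp, ih, ← Function.iterate_succ_apply]

/-! ### Part (b) setup -/

lemma swapPoly_add (p q : Polynomial (Polynomial ℤ)) :
    swapPoly (p + q) = swapPoly p + swapPoly q := by
  simp [swapPoly, eval₂_add]

lemma swapPoly_mul (p q : Polynomial (Polynomial ℤ)) :
    swapPoly (p * q) = swapPoly p * swapPoly q := by
  simp [swapPoly, eval₂_mul]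

lemma swapPoly_pow (p : Polynomial (Polynomial ℤ)) (n : ℕ) :
    swapPoly (p ^ n) = swapPoly p ^ n := by
  simp [swapPoly, eval₂_pow]

lemma swapPoly_sub (p q : Polynomial (Polynomial ℤ)) :
    swapPoly (p - q) = swapPoly p - swapPoly q := by
  simp [swapPoly, eval₂_sub]

lemma swapPoly_one : swapPoly (1 : Polynomial (Polynomial ℤ)) = 1 := by
  simp [swapPoly]

lemma swapPoly_X : swapPoly (X : Polynomial (Polynomial ℤ)) = C X := by
  simp [swapPoly]

lemma swapPoly_CX : swapPoly (C X : Polynomial (Polynomial ℤ)) = X := by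
  simp [swapPoly, eval₂_C]

def Edeg (d : ℕ) : ℕ → ℕ
  | 0 => 0
  | k + 1 => (d + 1) * Edeg d k + 1

lemma Edeg_mul (d k : ℕ) : d * Edeg d k + 1 = (d + 1) ^ k := by
  induction k with
  | zero => simp [Edeg]
  | succ k ih => rw [Edeg, pow_succ, ← ih]; ring

lemma Edeg_eq (d : ℕ) (hd : 1 ≤ d) (k : ℕ) : Edeg d k = ((d + 1) ^ k - 1) / d := by
  have h := Edeg_mul d k
  have h2 : (d + 1) ^ k - 1 = d * Edeg d k := by omega
  rw [h2, Nat.mul_div_cancel_left _ (by omega)]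

lemma Edeg_pos (d k : ℕ) (hk : 1 ≤ k) : 1 ≤ Edeg d k := by
  cases k with
  | zero => omega
  | succ k => rw [Edeg]; omega

lemma swapPmA_one (d : ℕ) : swapPoly (PmA d 1) = C X := by
  rw [PmA_one, swapPoly_X]

lemma swapPmA_succ (d m : ℕ) :
    swapPoly (PmA d (m + 1))
      = (swapPoly (PmA d m)) ^ (d + 1) * (C X - X) + X * swapPoly (PmA d m) := by
  rw [PmA_succ, swapPoly_add, swapPoly_mul, swapPoly_mul, swapPoly_pow, swapPoly_sub,
    swapPoly_X, swapPoly_CX]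

lemma swapPmA_deg (d : ℕ) (hd : 1 ≤ d) :
    ∀ m, 2 ≤ m → (swapPoly (PmA d m)).natDegree = Edeg d (m - 1)
      ∧ swapPoly (PmA d m) ≠ 0 := by
  intro m hm
  induction m, hm using Nat.le_induction with
  | base =>
    have h2 : swapPoly (PmA d 2) = C (X - X ^ (d + 1)) * X + C (X ^ (d + 2)) := by
      rw [show (2 : ℕ) = 1 + 1 from rfl, swapPmA_succ, swapPmA_one, map_sub, map_pow, map_pow]
      ring
    have ha : (X - X ^ (d + 1) : Polynomial ℤ) ≠ 0 := by
      intro h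
      have hXX : (X : Polynomial ℤ) = X ^ (d + 1) := by linear_combination h
      have h3 := congrArg natDegree hXX
      simp only [natDegree_X, natDegree_X_pow] at h3
      omega
    refine ⟨?_, ?_⟩
    · rw [h2, natDegree_linear ha]
      simp [Edeg]
    · rw [h2]
      exact ne_zero_of_natDegree_gt (n := 0) (by rw [natDegree_linear ha]; omega)
  | succ m hm ih =>
    obtain ⟨hdeg, hne⟩ := ih
    set G := swapPoly (PmA d m) with hG
    have he1 : 1 ≤ Edeg d (m - 1) := Edeg_pos d (m - 1) (by omega)
    have hCXX : (C X - X : Polynomial (Polynomial ℤ)) ≠ 0 := by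
      intro h
      have h0 : (X - C X : Polynomial (Polynomial ℤ)) = 0 := by linear_combination -h
      have h1 := congrArg natDegree h0
      rw [natDegree_X_sub_C] at h1
      simp at h1
    have hdCXX : (C X - X : Polynomial (Polynomial ℤ)).natDegree = 1 := by
      have hneg : (C X - X : Polynomial (Polynomial ℤ)) = -(X - C X) := by ring
      rw [hneg, natDegree_neg, natDegree_X_sub_C]
    have hA : (G ^ (d + 1) * (C X - X)).natDegree = (d + 1) * Edeg d (m - 1) + 1 := by
      rw [natDegree_mul (pow_ne_zero _ hne) hCXX, natDegree_pow, hdeg, hdCXX]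
    have hAne : G ^ (d + 1) * (C X - X) ≠ 0 := mul_ne_zero (pow_ne_zero _ hne) hCXX
    have hB : (X * G).natDegree ≤ 1 + Edeg d (m - 1) := by
      calc (X * G).natDegree ≤ (X : Polynomial (Polynomial ℤ)).natDegree + G.natDegree :=
            natDegree_mul_le
        _ = 1 + Edeg d (m - 1) := by rw [natDegree_X, hdeg]
    have hlt : (X * G).degree < (G ^ (d + 1) * (C X - X)).degree := by
      apply lt_of_le_of_lt degree_le_natDegree
      rw [degree_eq_natDegree hAne, hA]
      have hlt' : (X * G).natDegree < (d + 1) * Edeg d (m - 1) + 1 := by nlinarith [hB, he1, hd]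
      exact_mod_cast hlt'
    have hdeg' : (G ^ (d + 1) * (C X - X) + X * G).degree
        = (G ^ (d + 1) * (C X - X)).degree := degree_add_eq_left_of_degree_lt hlt
    have hne' : G ^ (d + 1) * (C X - X) + X * G ≠ 0 := by
      intro h
      rw [h, degree_zero, degree_eq_natDegree hAne] at hdeg'
      exact absurd hdeg'.symm (by simp)
    refine ⟨?_, ?_⟩
    · rw [swapPmA_succ, ← hG]
      have hnat := natDegree_eq_of_degree_eq hdeg'
      rw [hnat, hA]
      have hm1 : m + 1 - 1 = (m - 1) + 1 := by omega
      rw [hm1, Edeg]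
    · rw [swapPmA_succ, ← hG]
      exact hne'


theorem F_m_properties (d m : ℕ) (hd : 1 ≤ d) (hm : 1 ≤ m) :
    -- (a) α ↦ f̃(α) maps the set of roots of F_m in an algebraic closure of ℚ(c)
    -- bijectively onto itself:
    Set.BijOn (fun α => ((fTilA d).map toClos).eval α)
      {α : AlgebraicClosure (FractionRing (Polynomial ℤ)) | ((FmA d m).map toClos).eval α = 0}
      {α : AlgebraicClosure (FractionRing (Polynomial ℤ)) | ((FmA d m).map toClos).eval α = 0}
    ∧
    -- (b) deg_c F_m = ((d+1)^{m−1} − 1)/d (the degree in c, computed after swapping the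
    -- variables c and z):
    (swapPoly (FmA d m)).natDegree = ((d + 1) ^ (m - 1) - 1) / d
    ∧
    -- (c) d^{((d+1)^{m−1} − 1)/d}·F_m(z) ∈ ℤ[dc, z]: it equals Q(dc, z) for some
    -- Q ∈ ℤ[t][z] (outer variable z, inner variable t, with t ↦ dc):
    ∃ Q : Polynomial (Polynomial ℤ),
      (d : Polynomial (Polynomial ℤ)) ^ (((d + 1) ^ (m - 1) - 1) / d) * FmA d m
        = Q.map (Polynomial.eval₂RingHom (Int.castRingHom (Polynomial ℤ))
            ((d : Polynomial ℤ) * X)) := by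
  have hE : ((d + 1) ^ (m - 1) - 1) / d = Edeg d (m - 1) := (Edeg_eq d hd (m - 1)).symm
  rw [hE]
  refine ⟨?_, ?_, ?_⟩
  -- Part (a)
  · set F : Ω → Ω := fun α => ((fTilA d).map toClos).eval α with hF
    set S : Set Ω := {α | ((FmA d m).map toClos).eval α = 0} with hS
    have heval : ∀ α : Ω, Polynomial.eval α ((PmA d m).map toClos)
        = ∏ i ∈ Finset.range m, F^[i] α := by
      intro α
      rw [PmA, Polynomial.map_prod, eval_prod]
      exact Finset.prod_congr rfl fun i _ => eval_polyIter d i α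
    have hmem : ∀ α : Ω, α ∈ S ↔ ∏ i ∈ Finset.range m, F^[i] α = 1 := by
      intro α
      rw [hS, Set.mem_setOf_eq, FmA, ← PmA, Polynomial.map_sub, Polynomial.map_one, eval_sub,
        eval_one, sub_eq_zero, heval]
    have hkey : ∀ α : Ω, F^[m] α
        = (∏ i ∈ Finset.range m, F^[i] α) ^ d * (α - toClos X) + toClos X := by
      intro α
      have h := congrArg (fun p => Polynomial.eval α (p.map toClos)) (polyIter_eq d m)
      simp only [Polynomial.map_add, Polynomial.map_mul, Polynomial.map_pow,
        Polynomial.map_sub, Polynomial.map_X, Polynomial.map_C, eval_add, eval_mul, eval_pow,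
        eval_sub, eval_X, eval_C] at h
      rw [eval_polyIter, heval α, ← hF] at h
      exact h
    have hfix : ∀ α ∈ S, F^[m] α = α := by
      intro α hα
      rw [hkey, (hmem α).1 hα, one_pow, one_mul, sub_add_cancel]
    have hne0 : ∀ α ∈ S, α ≠ 0 := by
      intro α hα h0
      have h1 := (hmem α).1 hα
      rw [h0] at h1
      have hz : ∏ i ∈ Finset.range m, F^[i] (0 : Ω) = 0 := by
        apply Finset.prod_eq_zero (Finset.mem_range.mpr (show 0 < m by omega))
        simp
      rw [hz] at h1
      exact zero_ne_one h1
    have hmaps : Set.MapsTo F S S := by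
      intro α hα
      have hprod := (hmem α).1 hα
      refine (hmem (F α)).2 ?_
      have h2 := Finset.prod_range_succ' (fun i => F^[i] α) m
      rw [Finset.prod_range_succ, hprod, one_mul, hfix α hα, Function.iterate_zero_apply] at h2
      have h3 : ∏ i ∈ Finset.range m, F^[i] (F α) = ∏ i ∈ Finset.range m, F^[i + 1] α :=
        Finset.prod_congr rfl fun i _ => (Function.iterate_succ_apply F i α).symm
      rw [h3]
      exact mul_right_cancel₀ (hne0 α hα) (by rw [one_mul]; exact h2.symm)
    have hmapsg : Set.MapsTo F^[m - 1] S S := hmaps.iterate (m - 1)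
    refine Set.InvOn.bijOn ⟨?_, ?_⟩ hmaps hmapsg
    · intro α hα
      have h1 : F^[m] α = F^[m - 1] (F α) := by
        conv_lhs => rw [show m = (m - 1) + 1 by omega]
        rw [Function.iterate_succ_apply]
      rw [← h1]
      exact hfix α hα
    · intro α hα
      have h1 : F^[m] α = F (F^[m - 1] α) := by
        conv_lhs => rw [show m = (m - 1) + 1 by omega]
        rw [Function.iterate_succ_apply']
      rw [← h1]
      exact hfix α hα
  -- Part (b)
  · have hFm : swapPoly (FmA d m) = swapPoly (PmA d m) - 1 := by
      rw [FmA, ← PmA, swapPoly_sub, swapPoly_one]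
    rcases Nat.lt_or_ge m 2 with h2 | h2
    · have hm1 : m = 1 := by omega
      subst hm1
      rw [hFm, swapPmA_one]
      have hC : (C X - 1 : Polynomial (Polynomial ℤ)) = C (X - 1) := by
        rw [map_sub, map_one]
      rw [hC, natDegree_C]
      simp [Edeg]
    · obtain ⟨hdeg, hne⟩ := swapPmA_deg d hd m h2
      rw [hFm, show (1 : Polynomial (Polynomial ℤ)) = C 1 from (map_one C).symm,
        natDegree_sub_C, hdeg]
  -- Part (c)
  · have key : ∀ k, 1 ≤ k → ∃ Q : Polynomial (Polynomial ℤ),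
        (d : Polynomial (Polynomial ℤ)) ^ (Edeg d (k - 1)) * PmA d k
          = Q.map (Polynomial.eval₂RingHom (Int.castRingHom (Polynomial ℤ))
              ((d : Polynomial ℤ) * X)) := by
      intro k hk
      induction k, hk using Nat.le_induction with
      | base =>
        refine ⟨X, ?_⟩
        simp [PmA_one, Edeg]
      | succ k hk ih =>
        obtain ⟨Q, hQ⟩ := ih
        set ψ := Polynomial.eval₂RingHom (Int.castRingHom (Polynomial ℤ))
          ((d : Polynomial ℤ) * X) with hψ
        set e := Edeg d (k - 1) with he
        refine ⟨Q ^ (d + 1) * ((d : Polynomial (Polynomial ℤ)) * X - C X)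
          + C X * (d : Polynomial (Polynomial ℤ)) ^ (d * e) * Q, ?_⟩
        have hmapX : (X : Polynomial (Polynomial ℤ)).map ψ = X := Polynomial.map_X ψ
        have hmapCX : (C X : Polynomial (Polynomial ℤ)).map ψ
            = (d : Polynomial (Polynomial ℤ)) * C X := by
          rw [Polynomial.map_C, hψ]
          simp [coe_eval₂RingHom]
        have hmapd : ((d : Polynomial (Polynomial ℤ))).map ψ = (d : Polynomial (Polynomial ℤ)) :=
          Polynomial.map_natCast _ d
        rw [Polynomial.map_add, Polynomial.map_mul, Polynomial.map_mul, Polynomial.map_mul,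
          Polynomial.map_pow, Polynomial.map_pow, Polynomial.map_sub, Polynomial.map_mul,
          hmapX, hmapCX, hmapd, ← hQ]
        have hEk : Edeg d (k + 1 - 1) = (d + 1) * e + 1 := by
          have hk1 : k + 1 - 1 = (k - 1) + 1 := by omega
          rw [hk1, Edeg, he]
        rw [hEk, PmA_succ]
        have hp1 : ((d : Polynomial (Polynomial ℤ))) ^ ((d + 1) * e + 1)
            = ((d : Polynomial (Polynomial ℤ)) ^ e) ^ (d + 1) * (d : Polynomial (Polynomial ℤ)) := by
          rw [pow_succ, pow_mul']
        rw [hp1]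
        ring
    obtain ⟨Q, hQ⟩ := key m hm
    refine ⟨Q - (d : Polynomial (Polynomial ℤ)) ^ (Edeg d (m - 1)), ?_⟩
    rw [Polynomial.map_sub, ← hQ, Polynomial.map_pow, Polynomial.map_natCast]
    rw [FmA, ← PmA]
    ring
end
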